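/- arXiv:2302.08697 — 3 statements merged into one kernel-verified Lean document; each statement's English description precedes it below -/
import Mathlib

section
/- If d1 is monotonically decreasing (i.e., (a-b)(d1(a)-d1(b)) ≤ 0 for all a,b in its domain), then along trajectories of the closed-loop system with PI control u = -K_P y_N(x) - K_I x_c, ẋ_c = y_N(x), the Lyapunov function V(x̃, x̃_c) = ½ x̃ᵀ Q x̃ + (K_I/2) x̃_c² satisfies V̇ ≤ -θ1 x̃2² - θ2 x̃3² - K_P y_N(x)² ≤ 0, where x̃_c = x_c - x_c⋆ and x_c⋆ = -u⋆/K_I. -/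
/-! Write `x̃ = x - x⋆`. Subtracting the equilibrium equation from the dynamics, the skew-symmetric
`J₀` does no work on `x̃`, and by skew-symmetry of `J₁` the bilinear term contributes exactly
`-(u - u⋆) · x⋆ᵀ J₁ x = (u - u⋆) · y_N(x)`. Since `u - u⋆ = -K_P y_N - K_I x̃_c`, the integrator
part `K_I x̃_c y_N` of `V̇` cancels it, leaving the dissipation `-x̃ᵀ R x̃`, the monotonicity term
`x̃₁ (d₁(x₁) - d₁(x₁⋆)) ≤ 0` and `-K_P y_N²`. -/

open Matrix

section SkewSymmetric

variable {ι α : Type*} [Fintype ι] [CommRing α]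

theorem dotProduct_mulVec_comm_of_isSymm {Q : Matrix ι ι α} (hQ : Q.IsSymm) (v w : ι → α) :
    v ⬝ᵥ Q *ᵥ w = w ⬝ᵥ Q *ᵥ v := by
  rw [dotProduct_mulVec, ← mulVec_transpose, hQ.eq, dotProduct_comm]

theorem dotProduct_mulVec_anticomm_of_transpose_eq_neg {J : Matrix ι ι α} (hJ : Jᵀ = -J)
    (v w : ι → α) : v ⬝ᵥ J *ᵥ w = -(w ⬝ᵥ J *ᵥ v) := by
  rw [dotProduct_mulVec, ← mulVec_transpose, hJ, neg_mulVec, neg_dotProduct, dotProduct_comm]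

theorem dotProduct_mulVec_self_of_transpose_eq_neg [NoZeroDivisors α] [CharZero α]
    {J : Matrix ι ι α} (hJ : Jᵀ = -J) (v : ι → α) : v ⬝ᵥ J *ᵥ v = 0 :=
  CharZero.eq_neg_self_iff.1 (dotProduct_mulVec_anticomm_of_transpose_eq_neg hJ v v)

theorem dotProduct_sub_mulVec_sub_mulVec [NoZeroDivisors α] [CharZero α]
    {J₀ J₁ R : Matrix ι ι α} (hJ₀ : J₀ᵀ = -J₀) (hJ₁ : J₁ᵀ = -J₁) (u u' : α) (a b : ι → α) :
    (a - b) ⬝ᵥ ((J₀ + u • J₁ - R) *ᵥ a - (J₀ + u' • J₁ - R) *ᵥ b) =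
      -((a - b) ⬝ᵥ R *ᵥ (a - b)) - (u - u') * (b ⬝ᵥ J₁ *ᵥ a) := by
  have hJ₀a := dotProduct_mulVec_self_of_transpose_eq_neg hJ₀ a
  have hJ₀b := dotProduct_mulVec_self_of_transpose_eq_neg hJ₀ b
  have hJ₀ab := dotProduct_mulVec_anticomm_of_transpose_eq_neg hJ₀ a b
  have hJ₁a := dotProduct_mulVec_self_of_transpose_eq_neg hJ₁ a
  have hJ₁b := dotProduct_mulVec_self_of_transpose_eq_neg hJ₁ b
  have hJ₁ab := dotProduct_mulVec_anticomm_of_transpose_eq_neg hJ₁ a b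
  simp only [add_mulVec, sub_mulVec, smul_mulVec, mulVec_sub, dotProduct_add, dotProduct_sub,
    sub_dotProduct, dotProduct_smul, smul_eq_mul]
  linear_combination hJ₀a + hJ₀b - hJ₀ab + u * hJ₁a + u' * hJ₁b - u' * hJ₁ab

end SkewSymmetric

section Calculus

variable {ι 𝕜 : Type*} [Fintype ι] [NontriviallyNormedField 𝕜] {x y : 𝕜 → ι → 𝕜}
  {x' y' : ι → 𝕜} {t : 𝕜}

theorem HasDerivAt.dotProduct (hx : HasDerivAt x x' t) (hy : HasDerivAt y y' t) :
    HasDerivAt (fun s => x s ⬝ᵥ y s) (x' ⬝ᵥ y t + x t ⬝ᵥ y') t := by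
  refine (HasDerivAt.fun_sum fun i _ =>
    (hasDerivAt_pi.1 hx i).mul (hasDerivAt_pi.1 hy i)).congr_deriv ?_
  exact Finset.sum_add_distrib

theorem HasDerivAt.mulVec (Q : Matrix ι ι 𝕜) (hx : HasDerivAt x x' t) :
    HasDerivAt (fun s => Q *ᵥ x s) (Q *ᵥ x') t :=
  hasDerivAt_pi.2 fun i => HasDerivAt.fun_sum fun j _ => (hasDerivAt_pi.1 hx j).const_mul (Q i j)

theorem HasDerivAt.dotProduct_mulVec_self {Q : Matrix ι ι 𝕜} (hQ : Q.IsSymm)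
    (hx : HasDerivAt x x' t) :
    HasDerivAt (fun s => x s ⬝ᵥ Q *ᵥ x s) (2 * (x t ⬝ᵥ Q *ᵥ x')) t := by
  refine (hx.dotProduct (hx.mulVec Q)).congr_deriv ?_
  rw [dotProduct_mulVec_comm_of_isSymm hQ, two_mul]

end Calculus

section BoostConverter

variable {α : Type*} [CommRing α]

theorem transpose_boostJ₀ : (!![0, -1, 0; 1, 0, 0; 0, 0, 0] : Matrix (Fin 3) (Fin 3) α)ᵀ =
    -!![0, -1, 0; 1, 0, 0; 0, 0, 0] := by
  ext i j; fin_cases i <;> fin_cases j <;> simp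

theorem transpose_boostJ₁ : (!![0, 0, 0; 0, 0, -1; 0, 1, 0] : Matrix (Fin 3) (Fin 3) α)ᵀ =
    -!![0, 0, 0; 0, 0, -1; 0, 1, 0] := by
  ext i j; fin_cases i <;> fin_cases j <;> simp

theorem dotProduct_boostJ₁_mulVec (w v : Fin 3 → α) :
    w ⬝ᵥ !![0, 0, 0; 0, 0, -1; 0, 1, 0] *ᵥ v = -(w 1 * v 2 - w 2 * v 1) := by
  simp only [dotProduct, mulVec, of_apply, cons_val', cons_val_fin_one, Fin.sum_univ_three,
    cons_val_zero, cons_val_one, cons_val]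
  ring

theorem dotProduct_diagonal_mulVec_three (a b c : α) (v : Fin 3 → α) :
    v ⬝ᵥ diagonal ![a, b, c] *ᵥ v = a * v 0 ^ 2 + b * v 1 ^ 2 + c * v 2 ^ 2 := by
  simp only [dotProduct, mulVec_diagonal, Fin.sum_univ_three, Fin.isValue, cons_val_zero,
    cons_val_one, cons_val]
  ring

end BoostConverter

theorem pi_pbc_lyapunov_decrease_general
    (Cfc L C θ1 θ2 KP KI : ℝ)
    (hθ1 : 0 ≤ θ1) (hθ2 : 0 ≤ θ2) (hKP : 0 < KP) (hKI : 0 < KI)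
    (Q J0 J1 R : Matrix (Fin 3) (Fin 3) ℝ)
    (hQ : Q = Matrix.diagonal ![Cfc, L, C])
    (hJ0 : J0 = !![0, -1, 0; 1, 0, 0; 0, 0, 0])
    (hJ1 : J1 = !![0, 0, 0; 0, 0, -1; 0, 1, 0])
    (hR : R = Matrix.diagonal ![0, θ1, θ2])
    (d1 : ℝ → ℝ)
    (hmono : ∀ a b : ℝ, (a - b) * (d1 a - d1 b) ≤ 0)
    (d : ℝ → Fin 3 → ℝ) (hd : ∀ a, d a = ![d1 a, 0, 0])
    (us : ℝ) (xs : Fin 3 → ℝ)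
    (yN : (Fin 3 → ℝ) → ℝ) (hyN : ∀ z, yN z = xs 1 * z 2 - xs 2 * z 1)
    (x x' : ℝ → Fin 3 → ℝ) (xc : ℝ → ℝ)
    (u : ℝ → ℝ) (hu : ∀ t, u t = -KP * yN (x t) - KI * xc t)
    (hx : ∀ t i, HasDerivAt (fun s => x s i) (x' t i) t)
    (hxc : ∀ t, HasDerivAt xc (yN (x t)) t)
    (hdyn : ∀ t, Q.mulVec (x' t) = (J0 + u t • J1 - R).mulVec (x t) + d (x t 0))
    (heq : (J0 + us • J1 - R).mulVec xs + d (xs 0) = 0)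
    (xcs : ℝ) (hxcs : xcs = -us / KI)
    (V : ℝ → ℝ)
    (hV : ∀ t, V t = (1 / 2) * ((x t - xs) ⬝ᵥ Q.mulVec (x t - xs))
          + (KI / 2) * (xc t - xcs) ^ 2) :
    ∀ t v', HasDerivAt V v' t →
      v' ≤ -θ1 * (x t 1 - xs 1) ^ 2 - θ2 * (x t 2 - xs 2) ^ 2 - KP * (yN (x t)) ^ 2 ∧
      -θ1 * (x t 1 - xs 1) ^ 2 - θ2 * (x t 2 - xs 2) ^ 2 - KP * (yN (x t)) ^ 2 ≤ 0 := by
  intro t v' hv'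
  subst hQ hJ0 hJ1 hR
  have hVderiv : HasDerivAt V ((x t - xs) ⬝ᵥ diagonal ![Cfc, L, C] *ᵥ x' t
      + KI * (xc t - xcs) * yN (x t)) t := by
    have hx' : HasDerivAt (fun s => x s - xs) (x' t) t := (hasDerivAt_pi.2 (hx t)).sub_const xs
    have hV' := ((hx'.dotProduct_mulVec_self (isSymm_diagonal ![Cfc, L, C])).const_mul (1 / 2)).add
      ((((hxc t).sub_const xcs).pow 2).const_mul (KI / 2))
    rw [show V = _ from funext hV]
    exact hV'.congr_deriv (by norm_num; ring)
  have hpower : (x t - xs) ⬝ᵥ diagonal ![Cfc, L, C] *ᵥ x' t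
      = -(θ1 * (x t 1 - xs 1) ^ 2 + θ2 * (x t 2 - xs 2) ^ 2)
        + (x t 0 - xs 0) * (d1 (x t 0) - d1 (xs 0)) + (u t - us) * yN (x t) := by
    rw [hdyn, ← sub_zero (_ + d _), ← heq, add_sub_add_comm, dotProduct_add,
      dotProduct_sub_mulVec_sub_mulVec transpose_boostJ₀ transpose_boostJ₁,
      dotProduct_diagonal_mulVec_three, dotProduct_boostJ₁_mulVec, hyN, hd, hd]
    simp only [dotProduct, Fin.sum_univ_three, Pi.sub_apply, cons_val_zero, cons_val_one, cons_val,
      sub_self, mul_zero, add_zero]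
    ring
  have hu' : u t - us = -KP * yN (x t) - KI * (xc t - xcs) := by
    have hKIxcs : KI * xcs = -us := hxcs ▸ mul_div_cancel₀ (-us) hKI.ne'
    rw [hu]
    linear_combination -hKIxcs
  rw [hv'.unique hVderiv, hpower, hu']
  have hd1 := hmono (x t 0) (xs 0)
  have hθ1x := mul_nonneg hθ1 (sq_nonneg (x t 1 - xs 1))
  have hθ2x := mul_nonneg hθ2 (sq_nonneg (x t 2 - xs 2))
  have hKPy := mul_nonneg hKP.le (sq_nonneg (yN (x t)))
  constructor <;> linarith

theorem pi_pbc_lyapunov_decrease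
    (Cfc L C θ1 θ2 KP KI : ℝ) (hCfc : 0 < Cfc) (hL : 0 < L) (hC : 0 < C)
    (hθ1 : 0 ≤ θ1) (hθ2 : 0 ≤ θ2) (hKP : 0 < KP) (hKI : 0 < KI)
    (Q J0 J1 R : Matrix (Fin 3) (Fin 3) ℝ)
    (hQ : Q = Matrix.diagonal ![Cfc, L, C])
    (hJ0 : J0 = !![0, -1, 0; 1, 0, 0; 0, 0, 0])
    (hJ1 : J1 = !![0, 0, 0; 0, 0, -1; 0, 1, 0])
    (hR : R = Matrix.diagonal ![0, θ1, θ2])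
    (d1 : ℝ → ℝ)
    (hmono : ∀ a b : ℝ, (a - b) * (d1 a - d1 b) ≤ 0)
    (d : ℝ → Fin 3 → ℝ) (hd : ∀ a, d a = ![d1 a, 0, 0])
    (us : ℝ) (xs : Fin 3 → ℝ)
    (yN : (Fin 3 → ℝ) → ℝ) (hyN : ∀ z, yN z = xs 1 * z 2 - xs 2 * z 1)
    (x x' : ℝ → Fin 3 → ℝ) (xc : ℝ → ℝ)
    (u : ℝ → ℝ) (hu : ∀ t, u t = -KP * yN (x t) - KI * xc t)
    (hx : ∀ t i, HasDerivAt (fun s => x s i) (x' t i) t)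
    (hxc : ∀ t, HasDerivAt xc (yN (x t)) t)
    (hdyn : ∀ t, Q.mulVec (x' t) = (J0 + u t • J1 - R).mulVec (x t) + d (x t 0))
    (heq : (J0 + us • J1 - R).mulVec xs + d (xs 0) = 0)
    (xcs : ℝ) (hxcs : xcs = -us / KI)
    (V : ℝ → ℝ)
    (hV : ∀ t, V t = (1 / 2) * ((x t - xs) ⬝ᵥ Q.mulVec (x t - xs))
          + (KI / 2) * (xc t - xcs) ^ 2) :
    ∀ t v', HasDerivAt V v' t →
      v' ≤ -θ1 * (x t 1 - xs 1) ^ 2 - θ2 * (x t 2 - xs 2) ^ 2 - KP * (yN (x t)) ^ 2 ∧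
      -θ1 * (x t 1 - xs 1) ^ 2 - θ2 * (x t 2 - xs 2) ^ 2 - KP * (yN (x t)) ^ 2 ≤ 0 :=
  pi_pbc_lyapunov_decrease_general Cfc L C θ1 θ2 KP KI hθ1 hθ2 hKP hKI Q J0 J1 R hQ hJ0 hJ1 hR d1
    hmono d hd us xs yN hyN x x' xc u hu hx hxc hdyn heq xcs hxcs V hV
end

section
/- For the I&I estimator with state z1 satisfying ż1 = k1 x2 (x1 - z1 x2 + (k1/2) L x2³ - x3 u) and output θ̂1 = z1 - (k1/2) L x2², where x2 satisfies L ẋ2 = x1 - θ1 x2 - x3 u, the estimation error θ̃1 = θ̂1 - θ1 satisfies θ̃̇1 = -k1 x2² θ̃1. -/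
/-- Here `y` stands for the measured input `x₁ - x₃ u`. By the plant equation the derivative of
`(k/2) L x₂²` is `k x₂ (y - θ x₂)`, so `y` cancels against `ż` and only `-k x₂² (θ̂ - θ)` is left. -/
theorem hasDerivAt_immersionInvarianceError {k L θ y x₂' : ℝ} {x₂ z : ℝ → ℝ} {t : ℝ}
    (hx₂ : HasDerivAt x₂ x₂' t) (hplant : L * x₂' = y - θ * x₂ t)
    (hz : HasDerivAt z (k * x₂ t * (y - z t * x₂ t + (k / 2) * L * x₂ t ^ 3)) t) :
    HasDerivAt (fun s => z s - (k / 2) * L * x₂ s ^ 2 - θ)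
      (-k * x₂ t ^ 2 * (z t - (k / 2) * L * x₂ t ^ 2 - θ)) t := by
  refine ((hz.sub ((hx₂.pow 2).const_mul ((k / 2) * L))).sub_const θ).congr_deriv ?_
  push_cast
  linear_combination -(k * x₂ t) * hplant

theorem ii_estimator_theta1_general
    (k1 L θ1 : ℝ)
    (x1 x2 x3 u z1 x2' : ℝ → ℝ)
    (hx2 : ∀ t, HasDerivAt x2 (x2' t) t)
    (hdyn : ∀ t, L * x2' t = x1 t - θ1 * x2 t - x3 t * u t)
    (hz1 : ∀ t, HasDerivAt z1
      (k1 * x2 t * (x1 t - z1 t * x2 t + (k1 / 2) * L * (x2 t) ^ 3 - x3 t * u t)) t)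
    (θhat1 : ℝ → ℝ) (hθhat1 : ∀ t, θhat1 t = z1 t - (k1 / 2) * L * (x2 t) ^ 2) :
    ∀ t, HasDerivAt (fun s => θhat1 s - θ1) (-k1 * (x2 t) ^ 2 * (θhat1 t - θ1)) t := by
  obtain rfl : θhat1 = fun s => z1 s - (k1 / 2) * L * x2 s ^ 2 := funext hθhat1
  intro t
  refine hasDerivAt_immersionInvarianceError (y := x1 t - x3 t * u t) (hx2 t) ?_ ?_
  · rw [hdyn t]; ring
  · convert hz1 t using 2; ring

theorem ii_estimator_theta1
    (k1 L θ1 : ℝ) (hk1 : 0 < k1) (hL : 0 < L)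
    (x1 x2 x3 u z1 x2' : ℝ → ℝ)
    (hx2 : ∀ t, HasDerivAt x2 (x2' t) t)
    (hdyn : ∀ t, L * x2' t = x1 t - θ1 * x2 t - x3 t * u t)
    (hz1 : ∀ t, HasDerivAt z1
      (k1 * x2 t * (x1 t - z1 t * x2 t + (k1 / 2) * L * (x2 t) ^ 3 - x3 t * u t)) t)
    (θhat1 : ℝ → ℝ) (hθhat1 : ∀ t, θhat1 t = z1 t - (k1 / 2) * L * (x2 t) ^ 2) :
    ∀ t, HasDerivAt (fun s => θhat1 s - θ1) (-k1 * (x2 t) ^ 2 * (θhat1 t - θ1)) t :=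
  ii_estimator_theta1_general k1 L θ1 x1 x2 x3 u z1 x2' hx2 hdyn hz1 θhat1 hθhat1
end

section
/- For the I&I estimator with state z2 satisfying ż2 = k2 x3 (x2 u - z2 x3 + (k2/2) C x3³) and output θ̂2 = z2 - (k2/2) C x3², where x3 satisfies C ẋ3 = -θ2 x3 + x2 u, the estimation error θ̃2 = θ̂2 - θ2 satisfies θ̃̇2 = -k2 x3² θ̃2. -/
theorem HasDerivAt.sub_const_mul_sq {𝕜 : Type*} [NontriviallyNormedField 𝕜] {z x : 𝕜 → 𝕜}
    {z' x' t : 𝕜} (a : 𝕜) (hz : HasDerivAt z z' t) (hx : HasDerivAt x x' t) :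
    HasDerivAt (fun s => z s - a * x s ^ 2) (z' - 2 * a * x t * x') t :=
  (hz.sub ((hx.pow 2).const_mul a)).congr_deriv (by push_cast; ring)

theorem ii_estimator_theta2_general
    (k2 C θ2 : ℝ)
    (x2 x3 u z2 x3' : ℝ → ℝ)
    (hx3 : ∀ t, HasDerivAt x3 (x3' t) t)
    (hdyn : ∀ t, C * x3' t = -θ2 * x3 t + x2 t * u t)
    (hz2 : ∀ t, HasDerivAt z2
      (k2 * x3 t * (x2 t * u t - z2 t * x3 t + (k2 / 2) * C * (x3 t) ^ 3)) t)
    (θhat2 : ℝ → ℝ) (hθhat2 : ∀ t, θhat2 t = z2 t - (k2 / 2) * C * (x3 t) ^ 2) :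
    ∀ t, HasDerivAt (fun s => θhat2 s - θ2) (-k2 * (x3 t) ^ 2 * (θhat2 t - θ2)) t := by
  obtain rfl : θhat2 = fun s => z2 s - (k2 / 2) * C * (x3 s) ^ 2 := funext hθhat2
  intro t
  refine (((hz2 t).sub_const_mul_sq _ (hx3 t)).sub_const θ2).congr_deriv ?_
  -- The correction term has derivative k2 x3 (C ẋ3) = k2 x3 (-θ2 x3 + x2 u): its x2 u part
  -- cancels the one in ż2 and its θ2 part turns -k2 x3² θ̂2 into -k2 x3² θ̃2.
  linear_combination -k2 * x3 t * hdyn t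

theorem ii_estimator_theta2
    (k2 C θ2 : ℝ) (hk2 : 0 < k2) (hC : 0 < C)
    (x2 x3 u z2 x3' : ℝ → ℝ)
    (hx3 : ∀ t, HasDerivAt x3 (x3' t) t)
    (hdyn : ∀ t, C * x3' t = -θ2 * x3 t + x2 t * u t)
    (hz2 : ∀ t, HasDerivAt z2
      (k2 * x3 t * (x2 t * u t - z2 t * x3 t + (k2 / 2) * C * (x3 t) ^ 3)) t)
    (θhat2 : ℝ → ℝ) (hθhat2 : ∀ t, θhat2 t = z2 t - (k2 / 2) * C * (x3 t) ^ 2) :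
    ∀ t, HasDerivAt (fun s => θhat2 s - θ2) (-k2 * (x3 t) ^ 2 * (θhat2 t - θ2)) t :=
  ii_estimator_theta2_general k2 C θ2 x2 x3 u z2 x3' hx3 hdyn hz2 θhat2 hθhat2
end
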